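/- Let G₁, ..., Gₙ be groups each having property LR (every finitely generated subgroup is a virtual retract), let G = G₁ × ⋯ × Gₙ, let H ≤ G be finitely generated, and let Ĥ = π₁(H) × ⋯ × πₙ(H) where πᵢ is projection to Gᵢ. Then H is a virtual retract of G if and only if H is a virtual retract of Ĥ. -/

import Mathlib

def IsVirtualRetract {G : Type*} [Group G] (H : Subgroup G) : Prop :=
  ∃ V : Subgroup G, V.FiniteIndex ∧ H ≤ V ∧
    ∃ ρ : V →* G, (∀ v : V, ρ v ∈ H) ∧ (∀ v : V, (v : G) ∈ H → ρ v = v)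

def PropertyLR (Q : Type*) [Group Q] : Prop :=
  ∀ K : Subgroup Q, K.FG → IsVirtualRetract K

/-!
A finite product of virtual retracts is a virtual retract, so by property LR of the factors
`Ĥ = ∏ πᵢ(H)` is a virtual retract of `G`, each `πᵢ(H)` being finitely generated. Being a
virtual retract is inherited by intermediate subgroups and is transitive, so for `H ≤ Ĥ ≤ G`
the subgroup `H` is a virtual retract of `G` exactly when it is one of `Ĥ`.
-/

namespace Subgroup

variable {G : Type*} [Group G]

theorem FG.map {N : Type*} [Group N] {H : Subgroup G} (hH : H.FG) (f : G →* N) :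
    (H.map f).FG := by
  obtain ⟨S, rfl, hS⟩ := (fg_iff H).mp hH
  exact (fg_iff _).mpr ⟨f '' S, (MonoidHom.map_closure f S).symm, hS.image f⟩

instance finiteIndex_comap {G' : Type*} [Group G'] (V : Subgroup G) [V.FiniteIndex]
    (f : G' →* G) : (V.comap f).FiniteIndex :=
  ⟨by rw [index_comap]; exact (isFiniteRelIndex_of_finiteIndex (K := f.range)).relIndex_ne_zero⟩

instance finiteIndex_map_subtype (W : Subgroup G) [W.FiniteIndex] (V : Subgroup W)
    [V.FiniteIndex] : (V.map W.subtype).FiniteIndex :=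
  ⟨by
    rw [index_map_subtype]
    exact mul_ne_zero V.index_ne_zero_of_finite W.index_ne_zero_of_finite⟩

theorem finiteIndex_pi {ι : Type*} [Finite ι] {G : ι → Type*} [∀ i, Group (G i)]
    (V : ∀ i, Subgroup (G i)) [∀ i, (V i).FiniteIndex] : (pi Set.univ V).FiniteIndex := by
  have hpi : pi Set.univ V = ⨅ i, (V i).comap (Pi.evalMonoidHom G i) := by
    ext g
    simp [mem_pi, mem_iInf]
  rw [hpi]
  exact finiteIndex_iInf fun _ => inferInstance

end Subgroup

namespace IsVirtualRetract

variable {G : Type*} [Group G] {H K : Subgroup G}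

theorem subgroupOf (hH : IsVirtualRetract H) (hHK : H ≤ K) :
    IsVirtualRetract (H.subgroupOf K) := by
  obtain ⟨V, hV, hHV, ρ, hρH, hρ⟩ := hH
  let j : V.subgroupOf K →* V :=
    MonoidHom.codRestrict (K.subtype.comp (V.subgroupOf K).subtype) V fun v => v.2
  refine ⟨V.subgroupOf K, inferInstance, fun h hh => hHV hh,
    MonoidHom.codRestrict (ρ.comp j) K fun v => hHK (hρH (j v)), fun v => hρH (j v),
    fun v hv => Subtype.ext (hρ (j v) hv)⟩

theorem trans (hK : IsVirtualRetract K) (hHK : H ≤ K) (hH : IsVirtualRetract (H.subgroupOf K)) :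
    IsVirtualRetract H := by
  obtain ⟨W, hW, hKW, ρ, hρK, hρ⟩ := hK
  obtain ⟨V, hV, hHV, σ, hσH, hσ⟩ := hH
  let r : W →* K := MonoidHom.codRestrict ρ K hρK
  -- on `ρ⁻¹(V)`, of finite index in `W` and hence in `G`, `σ ∘ ρ` retracts onto `H`
  let e := (V.comap r).equivMapOfInjective W.subtype W.subtype_injective
  refine ⟨(V.comap r).map W.subtype, inferInstance, ?_,
    K.subtype.comp (σ.comp ((r.subgroupComap V).comp e.symm.toMonoidHom)), ?_, ?_⟩
  · intro h hh
    have hr : r ⟨h, hKW (hHK hh)⟩ = ⟨h, hHK hh⟩ := Subtype.ext (hρ _ (hHK hh))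
    exact ⟨⟨h, hKW (hHK hh)⟩, show r _ ∈ V from hr ▸ hHV hh, rfl⟩
  · intro u
    exact hσH _
  · intro u hu
    have he : ((e.symm u : W) : G) = u := congrArg Subtype.val (e.apply_symm_apply u)
    have hr : ((r.subgroupComap V (e.symm u) : K) : G) = u := (hρ _ (he ▸ hHK hu)).trans he
    show ((σ (r.subgroupComap V (e.symm u)) : K) : G) = u
    rw [hσ _ (Subgroup.mem_subgroupOf.mpr (hr ▸ hu)), hr]

theorem pi {ι : Type*} [Finite ι] {G : ι → Type*} [∀ i, Group (G i)]
    {H : ∀ i, Subgroup (G i)} (hH : ∀ i, IsVirtualRetract (H i)) :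
    IsVirtualRetract (Subgroup.pi Set.univ H) := by
  choose V hV hHV ρ hρH hρ using hH
  let restrict (i : ι) : Subgroup.pi Set.univ V →* V i :=
    MonoidHom.codRestrict ((Pi.evalMonoidHom G i).comp (Subgroup.pi Set.univ V).subtype) (V i)
      fun v => v.2 i trivial
  exact ⟨Subgroup.pi Set.univ V, Subgroup.finiteIndex_pi V, fun h hh i _ => hHV i (hh i trivial),
    MonoidHom.pi fun i => (ρ i).comp (restrict i), fun v i _ => hρH i _,
    fun v hv => funext fun i => hρ i _ (hv i trivial)⟩

end IsVirtualRetract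

theorem isVirtualRetract_iff_subgroupOf {G : Type*} [Group G] {H K : Subgroup G} (hHK : H ≤ K)
    (hK : IsVirtualRetract K) : IsVirtualRetract H ↔ IsVirtualRetract (H.subgroupOf K) :=
  ⟨fun hH => hH.subgroupOf hHK, hK.trans hHK⟩

theorem stmt10 {n : ℕ} (G : Fin n → Type*) [∀ i, Group (G i)]
    (hLR : ∀ i, PropertyLR (G i))
    (H : Subgroup (∀ i, G i)) (hH : H.FG) :
    IsVirtualRetract H ↔
      IsVirtualRetract
        (H.subgroupOf (Subgroup.pi Set.univ (fun i => H.map (Pi.evalMonoidHom G i)))) :=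
  isVirtualRetract_iff_subgroupOf (Subgroup.le_pi_iff.mpr fun _ _ => H.le_comap_map _)
    (IsVirtualRetract.pi fun i => hLR i _ (hH.map _))
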